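/- arXiv:1608.08663 — 2 statements merged into one kernel-verified Lean document; each statement's English description precedes it below -/
import Mathlib

section
/- Let f(z) = Σ_{j=1}^d b_j z^{α(j)} be a Laurent polynomial in n complex variables with nonzero coefficients b_j and exponents α(j) ∈ ℤ^n, and let F(w,x) = Σ_{j=1}^d w_j x_j in 2d complex variables. Then for every w ∈ ℝ^n: f is not lopsided at w if and only if the point (log|b_1|, …, log|b_d|, ⟨α(1), w⟩, …, ⟨α(d), w⟩) ∈ ℝ^d × ℝ^d belongs to the amoeba A(F). Consequently, the lopsided amoeba L(f) is the image, under the affine isomorphism inverse to w ↦ (log|b|, ⟨α(1),w⟩,…,⟨α(d),w⟩), of the intersection of A(F) with the affine slice {u = log|b|} and with ℝ^d times the linear amoeba {(⟨α(1),w⟩,…,⟨α(d),w⟩) : w ∈ ℝ^n} of the toric variety X_A. -/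
/-!
Writing `aⱼ = |bⱼ| e^{⟨α(j), w⟩}`, non-lopsidedness at `w` says `aₖ ≤ ∑_{j ≠ k} aⱼ` for every `k`,
and these polygon inequalities are exactly the condition for complex numbers of moduli `aⱼ`
to sum to zero, i.e. for `(Log|b|, (⟨α(j), w⟩)ⱼ)` to lie in the amoeba of `∑ wⱼ xⱼ`.
Such a closed polygon is built from a triangle: split the moduli other than the largest one,
`aₖ`, into two groups whose sums `q, r` form a triangle with `aₖ`, realise that triangle by the
intermediate value theorem, and lay each group out along one of its sides.
-/

open Finset

/-- Evaluation of the Laurent polynomial `f(z) = ∑ j, b j * z ^ α j` with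
coefficients `b` and integer exponent vectors `α`. -/
noncomputable def lauEval {n d : ℕ} (b : Fin d → ℂ) (α : Fin d → Fin n → ℤ)
    (z : Fin n → ℂ) : ℂ :=
  ∑ j, b j * ∏ i, z i ^ α j i

/-- The amoeba of the Laurent polynomial given by `b, α`: the image of its zero
set in the torus under the coordinatewise log-absolute-value map. -/
def amoeba {n d : ℕ} (b : Fin d → ℂ) (α : Fin d → Fin n → ℤ) :
    Set (Fin n → ℝ) :=
  {w | ∃ z : Fin n → ℂ, (∀ i, z i ≠ 0) ∧ lauEval b α z = 0 ∧
    ∀ i, w i = Real.log (‖z i‖)}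

/-- Lopsidedness of the Laurent polynomial given by `b, α` at the point
`w ∈ ℝⁿ` (i.e. at `Log|v|` where `|v i| = exp (w i)`). -/
def IsLopsidedAt {n d : ℕ} (b : Fin d → ℂ) (α : Fin d → Fin n → ℤ)
    (w : Fin n → ℝ) : Prop :=
  ∃ k : Fin d,
    (∑ j ∈ Finset.univ.erase k, ‖b j‖ * ∏ i, Real.exp (w i) ^ α j i) <
      ‖b k‖ * ∏ i, Real.exp (w i) ^ α k i

/-- The lopsided amoeba: the set of points where the polynomial is not lopsided. -/
def lopAmoeba {n d : ℕ} (b : Fin d → ℂ) (α : Fin d → Fin n → ℤ) :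
    Set (Fin n → ℝ) :=
  {w | ¬ IsLopsidedAt b α w}

/-- The cyclic resultant `cres(f; r)` of the Laurent polynomial given by `b, α`,
evaluated at `z`; it is the product of `f(ω₁ z₁, …, ωₙ zₙ)` over all `n`-tuples
`ω` of `r`-th roots of unity. -/
noncomputable def cresEval {n d : ℕ} (b : Fin d → ℂ) (α : Fin d → Fin n → ℤ)
    (r : ℕ) (z : Fin n → ℂ) : ℂ :=
  ∏ t : Fin n → Fin r,
    lauEval b α (fun i => Complex.exp (2 * Real.pi * Complex.I * (t i : ℕ) / r) * z i)

/-- The amoeba of the bilinear form `F(w,x) = ∑ wⱼ xⱼ`, as a subset of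
`ℝ^d × ℝ^d`. -/
def bilinearAmoeba (d : ℕ) : Set ((Fin d → ℝ) × (Fin d → ℝ)) :=
  {p | ∃ w x : Fin d → ℂ, (∀ j, w j ≠ 0) ∧ (∀ j, x j ≠ 0) ∧
    (∑ j, w j * x j) = 0 ∧
    (∀ j, p.1 j = Real.log (‖w j‖)) ∧
    (∀ j, p.2 j = Real.log (‖x j‖))}

/-- The affine embedding `w ↦ (Log|b|, (⟨α(1),w⟩, …, ⟨α(d),w⟩))` of `ℝⁿ` into
`ℝ^d × ℝ^d`. -/
noncomputable def toricEmbed {n d : ℕ} (b : Fin d → ℂ) (α : Fin d → Fin n → ℤ)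
    (w : Fin n → ℝ) : (Fin d → ℝ) × (Fin d → ℝ) :=
  ((fun j => Real.log (‖b j‖)), fun j => ∑ i, (α j i : ℝ) * w i)

open Complex

theorem Finset.exists_subset_abs_two_mul_sum_sub_sum_le {ι : Type*} (s : Finset ι) (a : ι → ℝ)
    {p : ℝ} (hp : 0 ≤ p) (ha : ∀ j ∈ s, 0 ≤ a j ∧ a j ≤ p) :
    ∃ t ⊆ s, |2 * ∑ j ∈ t, a j - ∑ j ∈ s, a j| ≤ p := by
  classical
  induction s using Finset.induction_on with
  | empty => exact ⟨∅, subset_refl _, by simpa using hp⟩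
  | insert j s hj ih =>
    obtain ⟨t, hts, ht⟩ := ih fun i hi => ha i (mem_insert_of_mem hi)
    obtain ⟨hj₀, hjp⟩ := ha j (mem_insert_self j s)
    rw [sum_insert hj]
    rw [abs_le] at ht
    rcases le_total 0 (2 * ∑ i ∈ t, a i - ∑ i ∈ s, a i) with hx | hx
    · exact ⟨t, hts.trans (subset_insert _ _), abs_le.2 ⟨by linarith, by linarith⟩⟩
    · refine ⟨insert j t, insert_subset_insert _ hts, ?_⟩
      rw [sum_insert fun h => hj (hts h), abs_le]
      constructor <;> linarith

theorem exists_norm_add_mul_exp_mul_I_eq {p q r : ℝ} (hp : 0 ≤ p) (hq : 0 ≤ q)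
    (hr₁ : |p - q| ≤ r) (hr₂ : r ≤ p + q) :
    ∃ φ : ℝ, ‖(p : ℂ) + q * exp (φ * I)‖ = r := by
  have hcont : Continuous fun φ : ℝ => ‖(p : ℂ) + q * exp (φ * I)‖ := by fun_prop
  have h₀ : ‖(p : ℂ) + q * exp ((0 : ℝ) * I)‖ = p + q := by
    simp only [ofReal_zero, zero_mul, exp_zero, mul_one]
    rw [← ofReal_add, norm_real, Real.norm_of_nonneg (by positivity)]
  have hπ : ‖(p : ℂ) + q * exp (Real.pi * I)‖ = |p - q| := by
    rw [exp_pi_mul_I, mul_neg_one, ← sub_eq_add_neg, ← ofReal_sub, norm_real, Real.norm_eq_abs]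
  obtain ⟨φ, -, hφ⟩ := intermediate_value_Icc' Real.pi_pos.le hcont.continuousOn
    (show r ∈ Set.Icc _ _ by rw [h₀, hπ]; exact ⟨hr₁, hr₂⟩)
  exact ⟨φ, hφ⟩

theorem exists_sum_mul_exp_mul_I_eq_zero {ι : Type*} [Fintype ι] [DecidableEq ι] (a : ι → ℝ)
    (ha : ∀ j, 0 ≤ a j) (h : ∀ k, a k ≤ ∑ j ∈ univ.erase k, a j) :
    ∃ θ : ι → ℝ, ∑ j, (a j : ℂ) * exp (θ j * I) = 0 := by
  rcases isEmpty_or_nonempty ι with hι | hι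
  · exact ⟨0, by simp⟩
  obtain ⟨k, -, hk⟩ := exists_max_image univ a univ_nonempty
  set E := univ.erase k
  obtain ⟨T, hTE, hT⟩ := E.exists_subset_abs_two_mul_sum_sub_sum_le a (ha k)
    fun j _ => ⟨ha j, hk j (mem_univ j)⟩
  set q := ∑ j ∈ T, a j
  set r := ∑ j ∈ E \ T, a j
  have hqr : q + r = ∑ j ∈ E, a j := by rw [add_comm]; exact sum_sdiff hTE
  have hkE : a k ≤ ∑ j ∈ E, a j := h k
  rw [abs_le] at hT
  obtain ⟨φ, hφ⟩ := exists_norm_add_mul_exp_mul_I_eq (q := q) (r := r) (ha k)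
    (sum_nonneg fun j _ => ha j) (abs_le.2 ⟨by linarith, by linarith⟩) (by linarith)
  set v : ℂ := a k + q * exp (φ * I) with hv
  -- the third side `r e^{iψ}` of the triangle, with `ψ = arg (-v)`
  have hψ : (r : ℂ) * exp (arg (-v) * I) = -v := by
    rw [← hφ, ← norm_neg v]; exact norm_mul_exp_arg_mul_I _
  set θ : ι → ℝ := fun j => if j = k then 0 else if j ∈ T then φ else arg (-v)
  have hθk : θ k = 0 := if_pos rfl
  have hθT : ∀ j ∈ T, θ j = φ := fun j hj => by
    simp only [θ, if_neg (ne_of_mem_erase (hTE hj)), if_pos hj]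
  have hθET : ∀ j ∈ E \ T, θ j = arg (-v) := fun j hj => by
    simp only [θ, if_neg (ne_of_mem_erase (mem_sdiff.1 hj).1), if_neg (mem_sdiff.1 hj).2]
  have hsumT : ∑ j ∈ T, (a j : ℂ) * exp (θ j * I) = q * exp (φ * I) := by
    rw [ofReal_sum, sum_mul]; exact sum_congr rfl fun j hj => by rw [hθT j hj]
  have hsumET : ∑ j ∈ E \ T, (a j : ℂ) * exp (θ j * I) = r * exp (arg (-v) * I) := by
    rw [ofReal_sum, sum_mul]; exact sum_congr rfl fun j hj => by rw [hθET j hj]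
  refine ⟨θ, ?_⟩
  rw [← add_sum_erase _ _ (mem_univ k), ← sum_sdiff hTE, hsumT, hsumET, hψ, hθk, ofReal_zero,
    zero_mul, exp_zero, mul_one, hv]
  ring

theorem norm_le_sum_erase_norm_of_sum_eq_zero {ι E : Type*} [SeminormedAddCommGroup E]
    [DecidableEq ι] {s : Finset ι} {y : ι → E} (hy : ∑ j ∈ s, y j = 0) {k : ι} (hk : k ∈ s) :
    ‖y k‖ ≤ ∑ j ∈ s.erase k, ‖y j‖ := by
  rw [← add_sum_erase s y hk, add_eq_zero_iff_eq_neg] at hy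
  rw [hy, norm_neg]
  exact norm_sum_le _ _

theorem mem_bilinearAmoeba_iff {d : ℕ} (p : (Fin d → ℝ) × (Fin d → ℝ)) :
    p ∈ bilinearAmoeba d ↔
      ∀ k, Real.exp (p.1 k + p.2 k) ≤ ∑ j ∈ univ.erase k, Real.exp (p.1 j + p.2 j) := by
  constructor
  · rintro ⟨W, X, hW, hX, hsum, hWp, hXp⟩ k
    have hnorm : ∀ j, ‖W j * X j‖ = Real.exp (p.1 j + p.2 j) := fun j => by
      rw [hWp, hXp, Real.exp_add, Real.exp_log (norm_pos_iff.2 (hW j)),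
        Real.exp_log (norm_pos_iff.2 (hX j)), norm_mul]
    simpa only [hnorm] using norm_le_sum_erase_norm_of_sum_eq_zero hsum (mem_univ k)
  · intro hp
    obtain ⟨θ, hθ⟩ := exists_sum_mul_exp_mul_I_eq_zero _ (fun j => (Real.exp_pos _).le) hp
    refine ⟨fun j => Real.exp (p.1 j) * exp (θ j * I), fun j => Real.exp (p.2 j),
      fun j => mul_ne_zero (ofReal_ne_zero.2 (Real.exp_pos _).ne') (exp_ne_zero _),
      fun j => ofReal_ne_zero.2 (Real.exp_pos _).ne', ?_, fun j => ?_, fun j => ?_⟩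
    · rw [← hθ]
      refine sum_congr rfl fun j _ => ?_
      rw [Real.exp_add, ofReal_mul]
      ring
    · rw [norm_mul, norm_exp_ofReal_mul_I, mul_one, norm_real, Real.norm_of_nonneg
        (Real.exp_pos _).le, Real.log_exp]
    · rw [norm_real, Real.norm_of_nonneg (Real.exp_pos _).le, Real.log_exp]

theorem norm_mul_prod_exp_zpow {ι : Type*} [Fintype ι] {c : ℂ} (hc : c ≠ 0) (β : ι → ℤ)
    (w : ι → ℝ) :
    ‖c‖ * ∏ i, Real.exp (w i) ^ β i = Real.exp (Real.log ‖c‖ + ∑ i, (β i : ℝ) * w i) := by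
  rw [Real.exp_add, Real.exp_log (norm_pos_iff.2 hc), Real.exp_sum]
  congr 1
  refine prod_congr rfl fun i _ => ?_
  rw [mul_comm, Real.exp_mul, Real.rpow_intCast]

theorem not_isLopsidedAt_iff {n d : ℕ} {b : Fin d → ℂ} (hb : ∀ j, b j ≠ 0)
    (α : Fin d → Fin n → ℤ) (w : Fin n → ℝ) :
    ¬ IsLopsidedAt b α w ↔ ∀ k, Real.exp ((toricEmbed b α w).1 k + (toricEmbed b α w).2 k) ≤
      ∑ j ∈ univ.erase k, Real.exp ((toricEmbed b α w).1 j + (toricEmbed b α w).2 j) := by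
  simp only [IsLopsidedAt, not_exists, not_lt, toricEmbed, norm_mul_prod_exp_zpow (hb _)]

theorem range_toricEmbed {n d : ℕ} (b : Fin d → ℂ) (α : Fin d → Fin n → ℤ) :
    Set.range (toricEmbed b α) =
      {p : (Fin d → ℝ) × (Fin d → ℝ) | p.1 = fun j => Real.log (‖b j‖)} ∩
        (Set.univ ×ˢ
          {y : Fin d → ℝ | ∃ w : Fin n → ℝ, ∀ j, y j = ∑ i, (α j i : ℝ) * w i}) := by
  ext ⟨u, y⟩
  simp only [Set.mem_range, toricEmbed, Prod.ext_iff, Set.mem_inter_iff, Set.mem_ofPred_eq,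
    Set.mem_prod, Set.mem_univ, true_and, funext_iff]
  constructor
  · rintro ⟨w, hu, hy⟩
    exact ⟨fun j => (hu j).symm, w, fun j => (hy j).symm⟩
  · rintro ⟨hu, w, hy⟩
    exact ⟨w, fun j => (hu j).symm, fun j => (hy j).symm⟩

/-- `f` is not lopsided at `w` iff `(Log|b|, (⟨α(j),w⟩)ⱼ)` lies in the amoeba
of `F(w,x) = ∑ wⱼ xⱼ`; consequently the lopsided amoeba `L(f)` is identified,
via this affine embedding, with the intersection of `A(F)` with the slice
`H_b = {Log|w| = Log|b|}` and with `ℝ^d × A(X_A)`, where `A(X_A)` is the linear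
amoeba of the toric variety `X_A`. -/
theorem lopsided_amoeba_is_intersection
    (n d : ℕ) (b : Fin d → ℂ) (hb : ∀ j, b j ≠ 0) (α : Fin d → Fin n → ℤ) :
    (∀ w : Fin n → ℝ,
      (¬ IsLopsidedAt b α w ↔ toricEmbed b α w ∈ bilinearAmoeba d))
    ∧ toricEmbed b α '' lopAmoeba b α =
        bilinearAmoeba d ∩
        {p : (Fin d → ℝ) × (Fin d → ℝ) |
          p.1 = fun j => Real.log (‖b j‖)} ∩
        (Set.univ ×ˢ
          {y : Fin d → ℝ | ∃ w : Fin n → ℝ, ∀ j, y j = ∑ i, (α j i : ℝ) * w i}) := by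
  have key : ∀ w, ¬ IsLopsidedAt b α w ↔ toricEmbed b α w ∈ bilinearAmoeba d := fun w =>
    (not_isLopsidedAt_iff hb α w).trans (mem_bilinearAmoeba_iff _).symm
  have hlop : lopAmoeba b α = toricEmbed b α ⁻¹' bilinearAmoeba d := Set.ext key
  refine ⟨key, ?_⟩
  rw [hlop, Set.image_preimage_eq_inter_range, range_toricEmbed, Set.inter_assoc]
end

section
/- Let f be a nonzero Laurent polynomial in n complex variables, let r be a positive integer, and write cres(f;r) = Σ_{β ∈ A(r)} b_{r,β} z^β with all b_{r,β} ≠ 0. Then the unlog amoeba U(f) = { (|z_1|,…,|z_n|) : z ∈ (ℂ∖{0})^n, f(z) = 0 } ⊆ (ℝ_{>0})^n is contained in the semi-algebraic set defined by the inequalities Σ_{β ∈ A(r)∖{β₀}} |b_{r,β}| x^β ≥ |b_{r,β₀}| x^{β₀} for every β₀ ∈ A(r), together with x_1,…,x_n > 0. That is, every point x = |v| with v a zero of f on the torus satisfies all the non-lopsidedness inequalities of cres(f;r). -/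
open Finset

/-!
If `f(v) = 0` then `cres(f;r)(v) = 0`, since the factor of `cres(f;r)` indexed by the trivial
tuple of roots of unity is `f` itself. A vanishing sum cannot have a term whose norm exceeds
the sum of the norms of the others, and the norm of the term `b_{r,β} v^β` is `|b_{r,β}| x^β`.
-/

theorem norm_le_sum_norm_erase_of_sum_eq_zero {ι E : Type*} [DecidableEq ι]
    [SeminormedAddCommGroup E] {s : Finset ι} {f : ι → E} (hf : ∑ i ∈ s, f i = 0)
    {k : ι} (hk : k ∈ s) :
    ‖f k‖ ≤ ∑ i ∈ s.erase k, ‖f i‖ := by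
  have hfk : f k = -∑ i ∈ s.erase k, f i := by
    rw [← add_sum_erase s f hk] at hf
    exact eq_neg_of_add_eq_zero_left hf
  calc ‖f k‖ = ‖∑ i ∈ s.erase k, f i‖ := by rw [hfk, norm_neg]
    _ ≤ ∑ i ∈ s.erase k, ‖f i‖ := norm_sum_le _ _

theorem norm_coeff_mul_monomial {n : ℕ} (c : ℂ) (β : Fin n → ℤ) (z : Fin n → ℂ) :
    ‖c * ∏ i, z i ^ β i‖ = ‖c‖ * ∏ i, ‖z i‖ ^ β i := by
  simp only [norm_mul, norm_prod, norm_zpow]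

theorem cresEval_eq_zero_of_lauEval_eq_zero {n d : ℕ} {b : Fin d → ℂ} {α : Fin d → Fin n → ℤ}
    {r : ℕ} (hr : 0 < r) {z : Fin n → ℂ} (hz : lauEval b α z = 0) :
    cresEval b α r z = 0 := by
  refine prod_eq_zero (mem_univ fun _ => ⟨0, hr⟩) ?_
  simpa using hz

theorem unlog_amoeba_subset_semialgebraic_general
    (n d : ℕ) (b : Fin d → ℂ)
    (α : Fin d → Fin n → ℤ) (r : ℕ) (hr : 0 < r)
    (e : ℕ) (c : Fin e → ℂ) (β : Fin e → Fin n → ℤ)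
    (hrep : ∀ z : Fin n → ℂ, (∀ i, z i ≠ 0) → cresEval b α r z = lauEval c β z) :
    {x : Fin n → ℝ | ∃ z : Fin n → ℂ, (∀ i, z i ≠ 0) ∧ lauEval b α z = 0 ∧
        ∀ i, x i = ‖z i‖} ⊆
      {x : Fin n → ℝ | (∀ i, 0 < x i) ∧ ∀ k : Fin e,
        ‖c k‖ * ∏ i, x i ^ β k i ≤
          ∑ j ∈ Finset.univ.erase k, ‖c j‖ * ∏ i, x i ^ β j i} := by
  rintro x ⟨z, hz, hfz, hx⟩
  obtain rfl : x = fun i => ‖z i‖ := funext hx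
  have hcres : lauEval c β z = 0 := by
    rw [← hrep z hz]
    exact cresEval_eq_zero_of_lauEval_eq_zero hr hfz
  refine ⟨fun i => norm_pos_iff.mpr (hz i), fun k => ?_⟩
  simpa only [norm_coeff_mul_monomial] using
    norm_le_sum_norm_erase_of_sum_eq_zero hcres (mem_univ k)

/-- The unlog amoeba `U(f)` is contained in the semi-algebraic set defined by
the non-lopsidedness inequalities of `cres(f;r)`: for every zero `z` of `f` on
the torus, the point `x = |z|` has positive coordinates and satisfies
`|b_{r,β₀}| x^{β₀} ≤ ∑_{β ≠ β₀} |b_{r,β}| x^β` for every exponent `β₀` in the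
support of `cres(f;r)`. -/
theorem unlog_amoeba_subset_semialgebraic
    (n d : ℕ) (hd : 0 < d) (b : Fin d → ℂ) (hb : ∀ j, b j ≠ 0)
    (α : Fin d → Fin n → ℤ) (hα : Function.Injective α) (r : ℕ) (hr : 0 < r)
    (e : ℕ) (c : Fin e → ℂ) (β : Fin e → Fin n → ℤ)
    (hc : ∀ j, c j ≠ 0) (hβ : Function.Injective β)
    (hrep : ∀ z : Fin n → ℂ, (∀ i, z i ≠ 0) → cresEval b α r z = lauEval c β z) :
    {x : Fin n → ℝ | ∃ z : Fin n → ℂ, (∀ i, z i ≠ 0) ∧ lauEval b α z = 0 ∧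
        ∀ i, x i = ‖z i‖} ⊆
      {x : Fin n → ℝ | (∀ i, 0 < x i) ∧ ∀ k : Fin e,
        ‖c k‖ * ∏ i, x i ^ β k i ≤
          ∑ j ∈ Finset.univ.erase k, ‖c j‖ * ∏ i, x i ^ β j i} :=
  unlog_amoeba_subset_semialgebraic_general n d b α r hr e c β hrep
end
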